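/- Let δ > 0 and let τ : (−δ, 0] → ℝ be a C³ function with τ(s) > 0 for all s ∈ (−δ, 0) and τ(0) = τ'(0) = 0. Then there exists ε₀ ∈ (0, δ) such that for every s₀ ∈ (−ε₀, 0), the sequence defined recursively by sₙ₊₁ = sₙ + τ(sₙ) satisfies sₙ ∈ (−δ, 0) for all n ≥ 0 and ∑_{n=0}^{∞} (−sₙ) = ∞. -/

import Mathlib

open Filter Topology Set

/-!
Since `τ(0) = τ'(0) = 0`, the mean value inequality, applied to `τ'` and then to `τ`, gives
`0 < τ(s) ≤ C s²` near `0`. For `x = -s` small this makes `x ↦ x - τ(-x)` shrink `x` by at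
most the factor `1 - C x`, hence `1 / xₙ₊₁ ≤ 1 / xₙ + 2C`. So `1 / xₙ` grows at most
linearly, `xₙ` is bounded below by a multiple of `1 / (n + 1)`, and the series diverges
like the harmonic series.
-/

theorem abs_le_mul_abs_of_abs_derivWithin_le {f : ℝ → ℝ} {s : Set ℝ} {x K : ℝ} (hx : x ≤ 0)
    (hs : Icc x 0 ⊆ s) (hf : DifferentiableOn ℝ f s)
    (hf' : ∀ y ∈ Icc x 0, |derivWithin f s y| ≤ K) (h0 : f 0 = 0) : |f x| ≤ K * |x| := by
  have := (convex_Icc x 0).norm_image_sub_le_of_norm_hasDerivWithin_le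
    (fun y hy => (hf y (hs hy)).hasDerivWithinAt.mono hs) hf'
    (right_mem_Icc.2 hx) (left_mem_Icc.2 hx)
  simpa [h0] using this

theorem exists_abs_le_mul_sq_of_contDiffOn_two {f : ℝ → ℝ} {δ : ℝ} (hδ : 0 < δ)
    (hf : ContDiffOn ℝ 2 f (Ioc (-δ) 0)) (h0 : f 0 = 0)
    (h0' : derivWithin f (Ioc (-δ) 0) 0 = 0) :
    ∃ C > 0, ∀ x ∈ Icc (-(δ / 2)) 0, |f x| ≤ C * x ^ 2 := by
  set S := Ioc (-δ) (0 : ℝ)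
  set T := Icc (-(δ / 2)) (0 : ℝ)
  have hS : UniqueDiffOn ℝ S := uniqueDiffOn_Ioc _ _
  have hTS : T ⊆ S := fun y hy => ⟨by linarith [hy.1], hy.2⟩
  have hsub : ∀ x ∈ T, Icc x 0 ⊆ S := fun x hx => (Icc_subset_Icc hx.1 le_rfl).trans hTS
  have hf'C : ContDiffOn ℝ 1 (derivWithin f S) S := hf.derivWithin hS (by norm_num)
  obtain ⟨M, hM⟩ := isCompact_Icc.exists_bound_of_continuousOn
    ((hf'C.continuousOn_derivWithin hS le_rfl).mono hTS)
  have hM0 : 0 ≤ M := (norm_nonneg _).trans (hM 0 ⟨by linarith, le_rfl⟩)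
  have hf'_lin : ∀ y ∈ T, |derivWithin f S y| ≤ M * |y| := fun y hy =>
    abs_le_mul_abs_of_abs_derivWithin_le hy.2 (hsub y hy) (hf'C.differentiableOn one_ne_zero)
      (fun z hz => hM z (Icc_subset_Icc hy.1 le_rfl hz)) h0'
  refine ⟨M + 1, by linarith, fun x hx => ?_⟩
  have hfx : |f x| ≤ M * |x| * |x| :=
    abs_le_mul_abs_of_abs_derivWithin_le hx.2 (hsub x hx) (hf.differentiableOn two_ne_zero)
      (fun y hy => (hf'_lin y (Icc_subset_Icc hx.1 le_rfl hy)).trans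
        (mul_le_mul_of_nonneg_left (abs_le_abs_of_nonpos hy.2 hy.1) hM0)) h0
  calc |f x| ≤ M * |x| * |x| := hfx
    _ = M * x ^ 2 := by rw [mul_assoc, abs_mul_abs_self, sq]
    _ ≤ (M + 1) * x ^ 2 := by nlinarith [sq_nonneg x]

theorem one_div_le_one_div_add_of_sub_mul_sq_le {a b C : ℝ} (ha : 0 < a) (hb : 0 < b)
    (hC : 0 ≤ C) (haC : 2 * C * a ≤ 1) (hab : a - C * a ^ 2 ≤ b) :
    1 / b ≤ 1 / a + 2 * C := by
  -- `(1 - C a)(1 + 2 C a) = 1 + C a (1 - 2 C a) ≥ 1`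
  have hmul : a ≤ b * (1 + 2 * C * a) := by
    nlinarith [mul_le_mul_of_nonneg_right hab (by positivity : 0 ≤ 1 + 2 * C * a),
      mul_nonneg (mul_nonneg hC (sq_nonneg a)) (sub_nonneg.2 haC)]
  calc 1 / b ≤ (1 + 2 * C * a) / a := by rw [div_le_div_iff₀ hb ha]; linarith
    _ = 1 / a + 2 * C := by field_simp

theorem tendsto_sum_atTop_of_one_div_succ_le {x : ℕ → ℝ} {c : ℝ} (hx : ∀ n, 0 < x n)
    (hstep : ∀ n, 1 / x (n + 1) ≤ 1 / x n + c) :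
    Tendsto (fun N => ∑ n ∈ Finset.range N, x n) atTop atTop := by
  set A := max (1 / x 0) c
  have hA : 0 < A := lt_max_of_lt_left (one_div_pos.2 (hx 0))
  have hinv : ∀ n : ℕ, 1 / x n ≤ A * (n + 1) := by
    intro n
    induction n with
    | zero => simp [A]
    | succ n ih =>
      push_cast
      linarith [hstep n, le_max_right (1 / x 0) c]
  have hlower : ∀ n : ℕ, A⁻¹ * (1 / (n + 1 : ℝ)) ≤ x n := fun n => by
    rw [← one_div, div_mul_div_comm, one_mul]
    exact (one_div_le (hx n) (by positivity)).1 (hinv n)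
  refine tendsto_atTop_mono (fun N => ?_)
    (Real.tendsto_sum_range_one_div_nat_succ_atTop.const_mul_atTop (inv_pos.2 hA))
  rw [Finset.mul_sum]
  exact Finset.sum_le_sum fun n _ => hlower n

theorem sum_of_iterates_diverges
    (δ : ℝ) (hδ : 0 < δ) (τ : ℝ → ℝ)
    (hsm : ContDiffOn ℝ 3 τ (Set.Ioc (-δ) 0))
    (hpos : ∀ s ∈ Set.Ioo (-δ) (0 : ℝ), 0 < τ s)
    (h0 : τ 0 = 0)
    (h0' : derivWithin τ (Set.Ioc (-δ) 0) 0 = 0) :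
    ∃ ε₀ ∈ Set.Ioo (0 : ℝ) δ, ∀ s₀ ∈ Set.Ioo (-ε₀) (0 : ℝ), ∀ s : ℕ → ℝ,
      s 0 = s₀ → (∀ n : ℕ, s (n + 1) = s n + τ (s n)) →
      (∀ n : ℕ, s n ∈ Set.Ioo (-δ) (0 : ℝ)) ∧
      Tendsto (fun N : ℕ => ∑ n ∈ Finset.range N, -(s n)) atTop atTop := by
  obtain ⟨C, hC, hquad⟩ := exists_abs_le_mul_sq_of_contDiffOn_two hδ (hsm.of_le (by norm_num)) h0 h0'
  set ε₀ := min (δ / 2) (1 / (2 * C))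
  have hε₀ : 0 < ε₀ := lt_min (by linarith) (by positivity)
  have hε₀δ : ε₀ ≤ δ / 2 := min_le_left _ _
  have hε₀C : 2 * C * ε₀ ≤ 1 := (le_div_iff₀' (by positivity)).1 (min_le_right _ _)
  have hτ : ∀ x ∈ Ioo (-ε₀) 0, 0 < τ x ∧ τ x ≤ C * x ^ 2 := fun x hx =>
    ⟨hpos x ⟨by linarith [hx.1], hx.2⟩,
      (le_abs_self _).trans (hquad x ⟨by linarith [hx.1], hx.2.le⟩)⟩
  refine ⟨ε₀, ⟨hε₀, by linarith⟩, fun s₀ hs₀ s hs0 hrec => ?_⟩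
  -- `C x² ≤ -x / 2` on `(-ε₀, 0)`, so one step at most halves the distance to `0`
  have hmem : ∀ n, s n ∈ Ioo (-ε₀) 0 := by
    intro n
    induction n with
    | zero => exact hs0 ▸ hs₀
    | succ n ih =>
      obtain ⟨hτpos, hτle⟩ := hτ (s n) ih
      rw [hrec n]
      constructor <;> nlinarith [ih.1, ih.2]
  refine ⟨fun n => ⟨by linarith [(hmem n).1], (hmem n).2⟩, ?_⟩
  refine tendsto_sum_atTop_of_one_div_succ_le (c := 2 * C) (fun n => neg_pos.2 (hmem n).2)
    fun n => one_div_le_one_div_add_of_sub_mul_sq_le (neg_pos.2 (hmem n).2)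
      (neg_pos.2 (hmem (n + 1)).2) hC.le (by nlinarith [(hmem n).1]) ?_
  rw [hrec n, neg_sq]
  linarith [(hτ (s n) (hmem n)).2]
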